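/- Let d₁, d₂ ≥ 1, set d = d₁ + d₂, let n₁, n₂ ≥ 2, set n = n₁ + n₂. Let V be a complex vector space of dimension d+1 and let V₁, V₂ ⊆ V be subspaces with dim V₁ = d₁+1, dim V₂ = d₂+1 and V₁ + V₂ = V (so that V₁ ∩ V₂ is one-dimensional); let q be a nonzero vector spanning V₁ ∩ V₂. Let p₁, …, p_{n₁} be nonzero vectors in V₁ and p_{n₁+1}, …, p_n nonzero vectors in V₂, and let c₁, …, c_n be nonnegative rational numbers with Σ_{i=1}^n cᵢ = d+1 and d₁ ≤ Σ_{i=1}^{n₁} cᵢ ≤ d₁+1. If the configuration (p₁, …, p_{n₁}, q) in V₁ with weights (c₁, …, c_{n₁}, (Σ_{i=n₁+1}^n cᵢ) − d₂) is semistable, and the configuration (p_{n₁+1}, …, p_n, q) in V₂ with weights (c_{n₁+1}, …, c_n, (Σ_{i=1}^{n₁} cᵢ) − d₁) is semistable, then the configuration (p₁, …, p_n) in V with weights (c₁, …, c_n) is semistable. -/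
import Mathlib


attribute [local instance] Classical.propDecidable

/-- A configuration of vectors `q : Fin N → V'` with rational weights `w : Fin N → ℚ` in a
finite-dimensional complex vector space `V'` is *semistable* if for every proper linear
subspace `W ⊊ V'` the total weight of the vectors lying in `W` is at most `dim W`
(the Hilbert–Mumford numerical criterion). -/
def Semistable {V' : Type*} [AddCommGroup V'] [Module ℂ V'] {N : ℕ}
    (q : Fin N → V') (w : Fin N → ℚ) : Prop :=
  ∀ W : Submodule ℂ V', W ≠ ⊤ →
    (∑ i ∈ Finset.univ.filter (fun i => q i ∈ W), w i) ≤ (Module.finrank ℂ ↥W : ℚ)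

/-- if the two attached configurations `(p₁,…,p_{n₁},q)` in `V₁` (with the
extra weight `(Σ_{i>n₁} cᵢ) - d₂` on the attaching vector `q`) and `(p_{n₁+1},…,p_n,q)` in
`V₂` (with the extra weight `(Σ_{i≤n₁} cᵢ) - d₁` on `q`) are semistable, then the glued
configuration `(p₁,…,p_n)` in `V` with weights `(c₁,…,c_n)` is semistable. -/
theorem semistable_of_attached_semistable
    (d₁ d₂ n₁ n₂ : ℕ) (hd₁ : 1 ≤ d₁) (hd₂ : 1 ≤ d₂) (hn₁ : 2 ≤ n₁) (hn₂ : 2 ≤ n₂)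
    (V : Type*) [AddCommGroup V] [Module ℂ V] [FiniteDimensional ℂ V]
    (hV : Module.finrank ℂ V = d₁ + d₂ + 1)
    (V₁ V₂ : Submodule ℂ V)
    (hV₁ : Module.finrank ℂ ↥V₁ = d₁ + 1) (hV₂ : Module.finrank ℂ ↥V₂ = d₂ + 1)
    (hsup : V₁ ⊔ V₂ = ⊤)
    (q : V) (hq : q ≠ 0) (hq₁ : q ∈ V₁) (hq₂ : q ∈ V₂)
    (hspan : V₁ ⊓ V₂ = Submodule.span ℂ {q})
    (p : Fin (n₁ + n₂) → V) (hp : ∀ i, p i ≠ 0)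
    (hp₁ : ∀ i : Fin n₁, p (Fin.castAdd n₂ i) ∈ V₁)
    (hp₂ : ∀ i : Fin n₂, p (Fin.natAdd n₁ i) ∈ V₂)
    (c : Fin (n₁ + n₂) → ℚ) (hc : ∀ i, 0 ≤ c i)
    (hcsum : ∑ i, c i = (d₁ : ℚ) + d₂ + 1)
    (hlo : (d₁ : ℚ) ≤ ∑ i : Fin n₁, c (Fin.castAdd n₂ i))
    (hhi : ∑ i : Fin n₁, c (Fin.castAdd n₂ i) ≤ (d₁ : ℚ) + 1)
    (hss₁ : Semistable
      (Fin.snoc (fun i : Fin n₁ => (⟨p (Fin.castAdd n₂ i), hp₁ i⟩ : ↥V₁)) ⟨q, hq₁⟩)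
      (Fin.snoc (fun i : Fin n₁ => c (Fin.castAdd n₂ i))
        ((∑ i : Fin n₂, c (Fin.natAdd n₁ i)) - (d₂ : ℚ))))
    (hss₂ : Semistable
      (Fin.snoc (fun i : Fin n₂ => (⟨p (Fin.natAdd n₁ i), hp₂ i⟩ : ↥V₂)) ⟨q, hq₂⟩)
      (Fin.snoc (fun i : Fin n₂ => c (Fin.natAdd n₁ i))
        ((∑ i : Fin n₁, c (Fin.castAdd n₂ i)) - (d₁ : ℚ)))) :
    Semistable p c := by
  intro W hW
  classical
  set s₁ : ℚ := ∑ i : Fin n₁, c (Fin.castAdd n₂ i) with hs₁def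
  set s₂ : ℚ := ∑ i : Fin n₂, c (Fin.natAdd n₁ i) with hs₂def
  have hs : s₁ + s₂ = (d₁ : ℚ) + d₂ + 1 := by
    rw [hs₁def, hs₂def, ← Fin.sum_univ_add]; exact hcsum
  rw [Finset.sum_filter, Fin.sum_univ_add]
  set S₁ : ℚ := ∑ i : Fin n₁, if p (Fin.castAdd n₂ i) ∈ W then c (Fin.castAdd n₂ i) else 0
    with hS₁def
  set S₂ : ℚ := ∑ i : Fin n₂, if p (Fin.natAdd n₁ i) ∈ W then c (Fin.natAdd n₁ i) else 0
    with hS₂def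
  have hS₁le : S₁ ≤ s₁ := by
    refine Finset.sum_le_sum fun i _ => ?_
    split
    · exact le_rfl
    · exact hc _
  have hS₂le : S₂ ≤ s₂ := by
    refine Finset.sum_le_sum fun i _ => ?_
    split
    · exact le_rfl
    · exact hc _
  -- Key consequence of semistability in V₁
  have key₁ : ¬ V₁ ≤ W →
      S₁ + (if q ∈ W then s₂ - (d₂ : ℚ) else 0) ≤
        (Module.finrank ℂ ↥(V₁ ⊓ W) : ℚ) := by
    intro h
    have hne : Submodule.comap V₁.subtype W ≠ ⊤ := by
      rw [Ne, Submodule.comap_subtype_eq_top]; exact h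
    have H := hss₁ (Submodule.comap V₁.subtype W) hne
    rw [Finset.sum_filter, Fin.sum_univ_castSucc] at H
    simp only [Fin.snoc_castSucc, Fin.snoc_last, Submodule.mem_comap,
      Submodule.coe_subtype] at H
    have hrk : Module.finrank ℂ ↥(Submodule.comap V₁.subtype W) =
        Module.finrank ℂ ↥(V₁ ⊓ W) := by
      rw [← Submodule.map_comap_subtype V₁ W]
      exact (Submodule.finrank_map_subtype_eq V₁ _).symm
    rw [hrk] at H
    exact H
  have key₂ : ¬ V₂ ≤ W →
      S₂ + (if q ∈ W then s₁ - (d₁ : ℚ) else 0) ≤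
        (Module.finrank ℂ ↥(V₂ ⊓ W) : ℚ) := by
    intro h
    have hne : Submodule.comap V₂.subtype W ≠ ⊤ := by
      rw [Ne, Submodule.comap_subtype_eq_top]; exact h
    have H := hss₂ (Submodule.comap V₂.subtype W) hne
    rw [Finset.sum_filter, Fin.sum_univ_castSucc] at H
    simp only [Fin.snoc_castSucc, Fin.snoc_last, Submodule.mem_comap,
      Submodule.coe_subtype] at H
    have hrk : Module.finrank ℂ ↥(Submodule.comap V₂.subtype W) =
        Module.finrank ℂ ↥(V₂ ⊓ W) := by
      rw [← Submodule.map_comap_subtype V₂ W]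
      exact (Submodule.finrank_map_subtype_eq V₂ _).symm
    rw [hrk] at H
    exact H
  by_cases h₁ : V₁ ≤ W
  · -- V₁ ⊆ W; then V₂ ⊄ W and q ∈ W
    have hqW : q ∈ W := h₁ hq₁
    have h₂ : ¬ V₂ ≤ W := fun h₂ => hW (top_unique (hsup ▸ sup_le h₁ h₂))
    have K₂ := key₂ h₂
    rw [if_pos hqW] at K₂
    -- dimension bound : d₁ + finrank (V₂ ⊓ W) ≤ finrank W
    have hsub : V₁ ⊔ (V₂ ⊓ W) ≤ W := sup_le h₁ inf_le_right
    have hEq := Submodule.finrank_sup_add_finrank_inf_eq V₁ (V₂ ⊓ W)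
    have hinf : V₁ ⊓ (V₂ ⊓ W) = Submodule.span ℂ {q} := by
      rw [← inf_assoc, hspan, inf_eq_left]
      exact Submodule.span_le.mpr (Set.singleton_subset_iff.mpr hqW)
    rw [hinf, finrank_span_singleton hq, hV₁] at hEq
    have hmono := Submodule.finrank_mono hsub
    have hdim : (d₁ : ℚ) + (Module.finrank ℂ ↥(V₂ ⊓ W) : ℚ) ≤
        (Module.finrank ℂ ↥W : ℚ) := by
      exact_mod_cast Nat.cast_le.mpr (by omega : d₁ + Module.finrank ℂ ↥(V₂ ⊓ W) ≤
        Module.finrank ℂ ↥W)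
    linarith only [hS₁le, K₂, hdim]
  · by_cases h₂ : V₂ ≤ W
    · have hqW : q ∈ W := h₂ hq₂
      have K₁ := key₁ h₁
      rw [if_pos hqW] at K₁
      have hsub : V₂ ⊔ (V₁ ⊓ W) ≤ W := sup_le h₂ inf_le_right
      have hEq := Submodule.finrank_sup_add_finrank_inf_eq V₂ (V₁ ⊓ W)
      have hinf : V₂ ⊓ (V₁ ⊓ W) = Submodule.span ℂ {q} := by
        rw [← inf_assoc, inf_comm V₂ V₁, hspan, inf_eq_left]
        exact Submodule.span_le.mpr (Set.singleton_subset_iff.mpr hqW)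
      rw [hinf, finrank_span_singleton hq, hV₂] at hEq
      have hmono := Submodule.finrank_mono hsub
      have hdim : (d₂ : ℚ) + (Module.finrank ℂ ↥(V₁ ⊓ W) : ℚ) ≤
          (Module.finrank ℂ ↥W : ℚ) := by
        exact_mod_cast Nat.cast_le.mpr (by omega : d₂ + Module.finrank ℂ ↥(V₁ ⊓ W) ≤
          Module.finrank ℂ ↥W)
      linarith only [hS₂le, K₁, hdim]
    · -- neither V₁ nor V₂ is contained in W
      have K₁ := key₁ h₁
      have K₂ := key₂ h₂
      have hsub : (V₁ ⊓ W) ⊔ (V₂ ⊓ W) ≤ W := sup_le inf_le_right inf_le_right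
      have hmono := Submodule.finrank_mono hsub
      have hEq := Submodule.finrank_sup_add_finrank_inf_eq (V₁ ⊓ W) (V₂ ⊓ W)
      have hinf : (V₁ ⊓ W) ⊓ (V₂ ⊓ W) = Submodule.span ℂ {q} ⊓ W := by
        rw [inf_inf_inf_comm, inf_idem, hspan]
      rw [hinf] at hEq
      by_cases hqW : q ∈ W
      · rw [if_pos hqW] at K₁ K₂
        have hq' : Submodule.span ℂ {q} ⊓ W = Submodule.span ℂ {q} := by
          rw [inf_eq_left]
          exact Submodule.span_le.mpr (Set.singleton_subset_iff.mpr hqW)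
        rw [hq', finrank_span_singleton hq] at hEq
        have hdim : (Module.finrank ℂ ↥(V₁ ⊓ W) : ℚ) + (Module.finrank ℂ ↥(V₂ ⊓ W) : ℚ) ≤
            (Module.finrank ℂ ↥W : ℚ) + 1 := by
          exact_mod_cast Nat.cast_le.mpr (by omega :
            Module.finrank ℂ ↥(V₁ ⊓ W) + Module.finrank ℂ ↥(V₂ ⊓ W) ≤
              Module.finrank ℂ ↥W + 1)
        linarith only [K₁, K₂, hdim, hs]
      · rw [if_neg hqW] at K₁ K₂
        have hq' : Submodule.span ℂ {q} ⊓ W = ⊥ := by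
          rw [eq_bot_iff]
          rintro x ⟨hx1, hx2⟩
          obtain ⟨a, rfl⟩ := Submodule.mem_span_singleton.mp hx1
          rcases eq_or_ne a 0 with rfl | ha
          · simp
          · have hqw : q ∈ W := by
              have h' := W.smul_mem a⁻¹ hx2
              rwa [smul_smul, inv_mul_cancel₀ ha, one_smul] at h'
            exact absurd hqw hqW
        rw [hq', finrank_bot] at hEq
        have hdim : (Module.finrank ℂ ↥(V₁ ⊓ W) : ℚ) + (Module.finrank ℂ ↥(V₂ ⊓ W) : ℚ) ≤
            (Module.finrank ℂ ↥W : ℚ) := by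
          exact_mod_cast Nat.cast_le.mpr (by omega :
            Module.finrank ℂ ↥(V₁ ⊓ W) + Module.finrank ℂ ↥(V₂ ⊓ W) ≤
              Module.finrank ℂ ↥W)
        linarith only [K₁, K₂, hdim]
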